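/- Let ρ > 0 and T > 0, and let φ, ψ : ℝ → ℝ be measurable with ∫_ℝ φ^2 dx ≤ 1 and ∫_ℝ ψ^2 dx ≤ 1. Then ∫_{ℝ^2} f_2(x_1, x_2) · |φ(x_1)| · |ψ(x_2)| dx_1 dx_2 ≤ 3/ρ, with integrals taken with respect to Lebesgue measure. -/

import Mathlib

open Real MeasureTheory ENNReal

/-- The second chaos kernel of the quadratic functional of the Ornstein–Uhlenbeck Lévy
process. -/
noncomputable def ouKernel (ρ T x₁ x₂ : ℝ) : ℝ :=
  (if x₁ ≤ T then (1 : ℝ) else 0) * (if x₂ ≤ T then (1 : ℝ) else 0) *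
    Real.exp (ρ * (x₁ + x₂)) *
    ((1 - Real.exp (-2 * ρ * T)) * (if max x₁ x₂ ≤ 0 then (1 : ℝ) else 0) +
      (Real.exp (-2 * ρ * max x₁ x₂) - Real.exp (-2 * ρ * T)) *
        (if 0 < max x₁ x₂ then (1 : ℝ) else 0))

/-!
The kernel is dominated by the Laplace kernel `exp (-ρ |x₁ - x₂|)`: the bracket is at most
`exp (-2ρ max x₁ x₂)`, and `ρ (x₁ + x₂) - 2ρ max x₁ x₂ = -ρ |x₁ - x₂|`. Every row and column of
the Laplace kernel integrates to `2/ρ`, so Schur's test, in the form obtained from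
`2ab ≤ a² + b²`, bounds the bilinear form on the unit ball of `L²` by `2/ρ`.
-/

theorem ENNReal.two_mul_le_add_sq (a b : ℝ≥0∞) : 2 * a * b ≤ a ^ 2 + b ^ 2 := by
  rcases eq_or_ne a ⊤ with rfl | ha
  · simp
  rcases eq_or_ne b ⊤ with rfl | hb
  · simp
  lift a to NNReal using ha
  lift b to NNReal using hb
  exact_mod_cast _root_.two_mul_le_add_sq a b

theorem two_mul_lintegral_lintegral_mul_le {α β : Type*} [MeasurableSpace α]
    [MeasurableSpace β] {μ : Measure α} {ν : Measure β} [SFinite μ] [SFinite ν]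
    {K : α → β → ℝ≥0∞} (hK : Measurable (Function.uncurry K)) {f : α → ℝ≥0∞}
    {g : β → ℝ≥0∞} (hf : Measurable f) (hg : Measurable g) {C : ℝ≥0∞}
    (hrow : ∀ x, ∫⁻ y, K x y ∂ν ≤ C) (hcol : ∀ y, ∫⁻ x, K x y ∂μ ≤ C) :
    2 * ∫⁻ x, ∫⁻ y, K x y * (f x * g y) ∂ν ∂μ ≤
      C * (∫⁻ x, f x ^ 2 ∂μ + ∫⁻ y, g y ^ 2 ∂ν) := by
  have hKx : ∀ x, Measurable (K x) := fun x => hK.comp measurable_prodMk_left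
  calc 2 * ∫⁻ x, ∫⁻ y, K x y * (f x * g y) ∂ν ∂μ
      = ∫⁻ x, ∫⁻ y, K x y * (2 * f x * g y) ∂ν ∂μ := by
        rw [← lintegral_const_mul' _ _ ofNat_ne_top]
        refine lintegral_congr fun x => ?_
        rw [← lintegral_const_mul' _ _ ofNat_ne_top]
        refine lintegral_congr fun y => ?_
        ring
    _ ≤ ∫⁻ x, ∫⁻ y, (f x ^ 2 * K x y + g y ^ 2 * K x y) ∂ν ∂μ := by
        gcongr with x y
        rw [← add_mul, mul_comm]
        gcongr
        exact ENNReal.two_mul_le_add_sq _ _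
    _ = ∫⁻ x, f x ^ 2 * ∫⁻ y, K x y ∂ν ∂μ + ∫⁻ y, g y ^ 2 * ∫⁻ x, K x y ∂μ ∂ν := by
        have hsplit : ∀ x, ∫⁻ y, (f x ^ 2 * K x y + g y ^ 2 * K x y) ∂ν =
            f x ^ 2 * ∫⁻ y, K x y ∂ν + ∫⁻ y, g y ^ 2 * K x y ∂ν := fun x => by
          rw [lintegral_add_left ((hKx x).const_mul _), lintegral_const_mul _ (hKx x)]
        simp_rw [hsplit]
        rw [lintegral_add_left (f := fun x => f x ^ 2 * ∫⁻ y, K x y ∂ν)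
            ((hf.pow_const 2).mul hK.lintegral_prod_right'),
          lintegral_lintegral_swap ((hg.pow_const 2).comp measurable_snd |>.mul hK).aemeasurable]
        congr 1
        refine lintegral_congr fun y => ?_
        exact lintegral_const_mul _ (hK.comp measurable_prodMk_right)
    _ ≤ ∫⁻ x, f x ^ 2 * C ∂μ + ∫⁻ y, g y ^ 2 * C ∂ν := by
        gcongr with x y
        exacts [hrow x, hcol y]
    _ = C * (∫⁻ x, f x ^ 2 ∂μ + ∫⁻ y, g y ^ 2 ∂ν) := by
        rw [lintegral_mul_const _ (hf.pow_const 2), lintegral_mul_const _ (hg.pow_const 2)]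
        ring

theorem lintegral_exp_neg_mul_abs {ρ : ℝ} (hρ : 0 < ρ) :
    ∫⁻ y, ENNReal.ofReal (exp (-(ρ * |y|))) = ENNReal.ofReal (2 / ρ) := by
  have hIic : ∫⁻ y in Set.Iic 0, ENNReal.ofReal (exp (-(ρ * |y|))) = ENNReal.ofReal (1 / ρ) := by
    rw [setLIntegral_congr_fun measurableSet_Iic (g := fun y => ENNReal.ofReal (exp (ρ * y)))
      fun y (hy : y ≤ 0) => by rw [abs_of_nonpos hy, mul_neg, neg_neg],
      ← ofReal_integral_eq_lintegral_ofReal (integrableOn_exp_mul_Iic hρ 0)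
        (ae_of_all _ fun _ => (exp_pos _).le), integral_exp_mul_Iic hρ]
    simp
  have hIoi : ∫⁻ y in Set.Ioi 0, ENNReal.ofReal (exp (-(ρ * |y|))) = ENNReal.ofReal (1 / ρ) := by
    rw [setLIntegral_congr_fun measurableSet_Ioi (g := fun y => ENNReal.ofReal (exp (-ρ * y)))
      fun y (hy : 0 < y) => by simp only [abs_of_pos hy, neg_mul],
      ← ofReal_integral_eq_lintegral_ofReal (integrableOn_exp_mul_Ioi (neg_neg_of_pos hρ) 0)
        (ae_of_all _ fun _ => (exp_pos _).le), integral_exp_mul_Ioi (neg_neg_of_pos hρ)]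
    simp
  rw [← lintegral_add_compl _ measurableSet_Ioi, Set.compl_Ioi, hIoi, hIic,
    ← ENNReal.ofReal_add (by positivity) (by positivity)]
  ring_nf

theorem lintegral_exp_neg_mul_abs_sub {ρ : ℝ} (hρ : 0 < ρ) (x : ℝ) :
    ∫⁻ y, ENNReal.ofReal (exp (-(ρ * |x - y|))) = ENNReal.ofReal (2 / ρ) :=
  (lintegral_sub_left_eq_self (fun y => ENNReal.ofReal (exp (-(ρ * |y|)))) x).trans
    (lintegral_exp_neg_mul_abs hρ)

theorem ouKernel_le_exp_neg_mul_abs_sub {ρ : ℝ} (hρ : 0 ≤ ρ) (T x₁ x₂ : ℝ) :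
    ouKernel ρ T x₁ x₂ ≤ exp (-(ρ * |x₁ - x₂|)) := by
  have hexp : exp (ρ * (x₁ + x₂)) * exp (-2 * ρ * max x₁ x₂) = exp (-(ρ * |x₁ - x₂|)) := by
    rw [← exp_add]
    congr 1
    rcases le_total x₁ x₂ with h | h
    · rw [max_eq_right h, abs_of_nonpos (by linarith)]; ring
    · rw [max_eq_left h, abs_of_nonneg (by linarith)]; ring
  unfold ouKernel
  set B := (1 - exp (-2 * ρ * T)) * (if max x₁ x₂ ≤ 0 then (1 : ℝ) else 0) +
      (exp (-2 * ρ * max x₁ x₂) - exp (-2 * ρ * T)) * (if 0 < max x₁ x₂ then (1 : ℝ) else 0)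
    with hB
  have hbracket : B ≤ exp (-2 * ρ * max x₁ x₂) := by
    have hT := exp_pos (-2 * ρ * T)
    split_ifs at hB <;> rw [hB]
    · linarith
    · have : 1 ≤ exp (-2 * ρ * max x₁ x₂) := one_le_exp (by nlinarith)
      linarith
    · linarith
    · linarith [exp_pos (-2 * ρ * max x₁ x₂)]
  clear_value B
  split_ifs
  · rw [one_mul, one_mul, ← hexp]
    exact mul_le_mul_of_nonneg_left hbracket (exp_pos _).le
  all_goals simpa using (exp_pos _).le

theorem stmt_11_general (ρ T : ℝ) (hρ : 0 < ρ)
    (φ ψ : ℝ → ℝ) (hφ : Measurable φ) (hψ : Measurable ψ)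
    (hφ2 : (∫⁻ x : ℝ, ENNReal.ofReal (φ x ^ 2)) ≤ 1)
    (hψ2 : (∫⁻ x : ℝ, ENNReal.ofReal (ψ x ^ 2)) ≤ 1) :
    (∫⁻ x₁ : ℝ, ∫⁻ x₂ : ℝ,
        ENNReal.ofReal (ouKernel ρ T x₁ x₂ * |φ x₁| * |ψ x₂|)) ≤
      ENNReal.ofReal (3 / ρ) := by
  set K : ℝ → ℝ → ℝ≥0∞ := fun x y => ENNReal.ofReal (exp (-(ρ * |x - y|)))
  have hK : Measurable (Function.uncurry K) := Measurable.ennreal_ofReal (by fun_prop)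
  have hrow (x : ℝ) : ∫⁻ y, K x y ≤ ENNReal.ofReal (2 / ρ) :=
    (lintegral_exp_neg_mul_abs_sub hρ x).le
  have hcol (y : ℝ) : ∫⁻ x, K x y ≤ ENNReal.ofReal (2 / ρ) := by
    simp_rw [K, abs_sub_comm]
    exact (lintegral_exp_neg_mul_abs_sub hρ y).le
  have hsq (f : ℝ → ℝ) : ∫⁻ x, ENNReal.ofReal |f x| ^ 2 = ∫⁻ x, ENNReal.ofReal (f x ^ 2) := by
    simp_rw [← ofReal_pow (abs_nonneg _), sq_abs]
  have hschur := two_mul_lintegral_lintegral_mul_le hK hφ.abs.ennreal_ofReal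
    hψ.abs.ennreal_ofReal hrow hcol
  rw [hsq, hsq] at hschur
  calc (∫⁻ x₁ : ℝ, ∫⁻ x₂ : ℝ, ENNReal.ofReal (ouKernel ρ T x₁ x₂ * |φ x₁| * |ψ x₂|))
      ≤ ∫⁻ x₁, ∫⁻ x₂, K x₁ x₂ * (ENNReal.ofReal |φ x₁| * ENNReal.ofReal |ψ x₂|) := by
        gcongr with x₁ x₂
        rw [← ofReal_mul (abs_nonneg _), ← ofReal_mul (exp_pos _).le, ← mul_assoc]
        gcongr
        exact ouKernel_le_exp_neg_mul_abs_sub hρ.le T x₁ x₂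
    _ ≤ ENNReal.ofReal (2 / ρ) := by
        rw [← ENNReal.mul_le_mul_iff_right two_ne_zero ofNat_ne_top]
        calc _ ≤ _ := hschur
          _ ≤ ENNReal.ofReal (2 / ρ) * 2 := by
            gcongr
            exact (add_le_add hφ2 hψ2).trans one_add_one_eq_two.le
          _ = 2 * ENNReal.ofReal (2 / ρ) := mul_comm _ _
    _ ≤ ENNReal.ofReal (3 / ρ) := ofReal_le_ofReal (by gcongr; norm_num)

/-- The operator norm bound: for `φ, ψ` in the unit ball of `L_2(ℝ)`,
`∫∫ f₂(x₁,x₂) |φ(x₁)| |ψ(x₂)| dx₁ dx₂ ≤ 3/ρ`. -/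
theorem stmt_11 (ρ T : ℝ) (hρ : 0 < ρ) (hT : 0 < T)
    (φ ψ : ℝ → ℝ) (hφ : Measurable φ) (hψ : Measurable ψ)
    (hφ2 : (∫⁻ x : ℝ, ENNReal.ofReal (φ x ^ 2)) ≤ 1)
    (hψ2 : (∫⁻ x : ℝ, ENNReal.ofReal (ψ x ^ 2)) ≤ 1) :
    (∫⁻ x₁ : ℝ, ∫⁻ x₂ : ℝ,
        ENNReal.ofReal (ouKernel ρ T x₁ x₂ * |φ x₁| * |ψ x₂|)) ≤
      ENNReal.ofReal (3 / ρ) :=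
  stmt_11_general ρ T hρ φ ψ hφ hψ hφ2 hψ2
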